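/- Let Π1 and Π2 be ground head-cycle-free disjunctive logic programs such that no literal occurring in the head of any rule of Π2 occurs anywhere in Π1. Then Π1 ∪ Π2 is head-cycle free. -/
import Mathlib


open scoped Classical

namespace ASP

universe u v

/-- A ground literal: an atom together with a sign
(`true` for the atom itself, `false` for its strong negation `¬a`).
The atom `|l|` of a literal `l` is its first component `l.1`. -/
abbrev Lit (α : Type u) : Type u := α × Bool

/-- A ground disjunctive rule, consisting of three finite sets of literals:
head, positive body and negative body. -/
structure Rule (α : Type u) : Type u where
  head : Finset (Lit α)
  pbody : Finset (Lit α)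
  nbody : Finset (Lit α)
deriving DecidableEq

variable {α : Type u}

/-- A set of literals is consistent if it contains no atom together with
its strong negation. -/
def Consistent (S : Set (Lit α)) : Prop :=
  ∀ a : α, ¬((a, true) ∈ S ∧ (a, false) ∈ S)

/-- `S` satisfies a rule `r`: the head intersects `S` whenever
`pbody(r) ⊆ S` and `nbody(r) ∩ S = ∅`. -/
def SatRule (S : Set (Lit α)) (r : Rule α) : Prop :=
  ((∀ l ∈ r.pbody, l ∈ S) ∧ (∀ l ∈ r.nbody, l ∉ S)) → ∃ l ∈ r.head, l ∈ S

/-- Answer sets of a positive program: `⊆`-minimal consistent sets of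
literals satisfying all rules. -/
def IsAnswerSetPos (P : Set (Rule α)) (S : Set (Lit α)) : Prop :=
  Consistent S ∧ (∀ r ∈ P, SatRule S r) ∧
    ∀ T : Set (Lit α), Consistent T → (∀ r ∈ P, SatRule T r) → T ⊆ S → T = S

/-- The reduct `P^S` of a program w.r.t. a set of literals `S`. -/
def reduct (P : Set (Rule α)) (S : Set (Lit α)) : Set (Rule α) :=
  {x | ∃ r ∈ P, (∀ l ∈ r.nbody, l ∉ S) ∧ x = ⟨r.head, r.pbody, ∅⟩}

/-- `S` is an answer set of `P` iff `S` is an answer set of the positive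
program `P^S`. -/
def IsAnswerSet (P : Set (Rule α)) (S : Set (Lit α)) : Prop :=
  IsAnswerSetPos (reduct P S) S

/-- `Lit(P)`: the literals occurring in a program. -/
def litsOf (P : Set (Rule α)) : Set (Lit α) :=
  {l | ∃ r ∈ P, l ∈ r.head ∨ l ∈ r.pbody ∨ l ∈ r.nbody}

/-- Edges of the positive dependency graph: from each head literal of a
rule to each of its positive body literals. -/
def DepEdge (P : Set (Rule α)) (l l' : Lit α) : Prop :=
  ∃ r ∈ P, l ∈ r.head ∧ l' ∈ r.pbody

/-- Head-cycle freeness: no two distinct literals occurring together in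
some rule head lie on a common cycle of the positive dependency graph. -/
def HeadCycleFree (P : Set (Rule α)) : Prop :=
  ∀ r ∈ P, ∀ l ∈ r.head, ∀ l' ∈ r.head, l ≠ l' →
    ¬(Relation.ReflTransGen (DepEdge P) l l' ∧ Relation.ReflTransGen (DepEdge P) l' l)

/-- `P ∪ S`: the program `P` extended with the literals of `S` as facts. -/
def withFacts (P : Set (Rule α)) (S : Set (Lit α)) : Set (Rule α) :=
  P ∪ {x | ∃ l ∈ S, x = ⟨{l}, ∅, ∅⟩}

/-- If `P1` and `P2` are head-cycle-free and no head literal of `P2` occurs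
anywhere in `P1`, then `P1 ∪ P2` is head-cycle free. -/
theorem statement11 {α : Type u} (P1 P2 : Set (Rule α))
    (h1fin : P1.Finite) (h2fin : P2.Finite)
    (h1 : HeadCycleFree P1) (h2 : HeadCycleFree P2)
    (hheads : ∀ r ∈ P2, ∀ l ∈ r.head, l ∉ litsOf P1) :
    HeadCycleFree (P1 ∪ P2) := by
  -- Lemma 1: from a literal of P1, union-paths stay in P1.
  have L1 : ∀ x y : Lit α, Relation.ReflTransGen (DepEdge (P1 ∪ P2)) x y →
      x ∈ litsOf P1 → Relation.ReflTransGen (DepEdge P1) x y ∧ y ∈ litsOf P1 := by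
    intro x y h
    induction h using Relation.ReflTransGen.head_induction_on with
    | refl => exact fun hx => ⟨Relation.ReflTransGen.refl, hx⟩
    | head hab _ ih =>
      rename_i a b _
      intro hx
      obtain ⟨r, hr, hah, hbp⟩ := hab
      cases hr with
      | inl hr1 =>
        have hb : b ∈ litsOf P1 := ⟨r, hr1, Or.inr (Or.inl hbp)⟩
        obtain ⟨hp, hy⟩ := ih hb
        exact ⟨Relation.ReflTransGen.head ⟨r, hr1, hah, hbp⟩ hp, hy⟩
      | inr hr2 => exact absurd hx (hheads r hr2 a hah)
  -- Lemma 2: a union-path ending outside litsOf P1 uses only P2 edges.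
  have L2 : ∀ x y : Lit α, Relation.ReflTransGen (DepEdge (P1 ∪ P2)) x y →
      y ∉ litsOf P1 → Relation.ReflTransGen (DepEdge P2) x y := by
    intro x y h
    induction h with
    | refl => exact fun _ => Relation.ReflTransGen.refl
    | tail _ hby ih =>
      rename_i b c _
      intro hc
      obtain ⟨r, hr, hbh, hcp⟩ := hby
      cases hr with
      | inl hr1 => exact absurd ⟨r, hr1, Or.inr (Or.inl hcp)⟩ hc
      | inr hr2 =>
        have hb : b ∉ litsOf P1 := hheads r hr2 b hbh
        exact Relation.ReflTransGen.tail (ih hb) ⟨r, hr2, hbh, hcp⟩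
  intro r hr l hl l' hl' hne ⟨hc1, hc2⟩
  cases hr with
  | inl hr1 =>
    have hlm : l ∈ litsOf P1 := ⟨r, hr1, Or.inl hl⟩
    have hlm' : l' ∈ litsOf P1 := ⟨r, hr1, Or.inl hl'⟩
    exact h1 r hr1 l hl l' hl' hne ⟨(L1 l l' hc1 hlm).1, (L1 l' l hc2 hlm').1⟩
  | inr hr2 =>
    have hlm : l ∉ litsOf P1 := hheads r hr2 l hl
    have hlm' : l' ∉ litsOf P1 := hheads r hr2 l' hl'
    exact h2 r hr2 l hl l' hl' hne ⟨L2 l l' hc1 hlm', L2 l' l hc2 hlm⟩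

end ASP
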